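/- Let m ∈ ℂ and consider the linear operators on C^∞(ℝ², ℂ) given by D₁f = f_x, D₂f = 2x f_x − m f, D₃f = x² f_x − mx f, and D₄f = f_y. If there exists a nonzero finite-dimensional subspace V of C^∞(ℝ², ℂ) with D_i(V) ⊆ V for i = 1, 2, 3, 4, then m is a nonnegative integer. -/

import Mathlib

/-- partial derivative in `x`. -/
noncomputable def pdx (f : ℝ × ℝ → ℂ) : ℝ × ℝ → ℂ := fun p => fderiv ℝ f p (1, 0)

/-- partial derivative in `y`. -/
noncomputable def pdy (f : ℝ × ℝ → ℂ) : ℝ × ℝ → ℂ := fun p => fderiv ℝ f p (0, 1)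

/-!
Take an eigenvector `f ∈ V` of `∂ₓ`, say `f_x = c f`. Then `x ∂ₓ(xᵏ f) = (k + c x) xᵏ f`, so
`D₂(xᵏ f) = (2k - m) xᵏ f + 2c xᵏ⁺¹ f` and, when `c = 0`, `D₃(xᵏ f) = (k - m) xᵏ⁺¹ f`.
Hence if `c ≠ 0`, or if `c = 0` and `m ∉ ℕ`, induction on `k` puts every `xᵏ f` in `V`.
As `f ≠ 0` is continuous, these functions are linearly independent (a polynomial in `x`
vanishing on an interval is zero), which is impossible in the finite-dimensional `V`.
-/

open Polynomial

section Calculus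

variable {f g : ℝ × ℝ → ℂ}

theorem pdx_add (hf : Differentiable ℝ f) (hg : Differentiable ℝ g) :
    pdx (f + g) = pdx f + pdx g := by
  ext p
  simp [pdx, fderiv_add (hf p) (hg p)]

theorem pdx_smul (c : ℂ) (hf : Differentiable ℝ f) : pdx (c • f) = c • pdx f := by
  ext p
  simp [pdx, fderiv_const_smul (hf p) c]

theorem pdx_mul (hf : Differentiable ℝ f) (hg : Differentiable ℝ g) :
    pdx (f * g) = f * pdx g + g * pdx f := by
  ext p
  simp [pdx, fderiv_mul (hf p) (hg p)]

theorem pdx_ofReal_fst : pdx (fun q : ℝ × ℝ => (q.1 : ℂ)) = 1 := by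
  ext p
  rw [pdx, show (fun q : ℝ × ℝ => (q.1 : ℂ)) = Complex.ofRealCLM.comp (.fst ℝ ℝ ℝ) from rfl,
    ContinuousLinearMap.fderiv]
  simp

theorem differentiable_ofReal_fst_pow (k : ℕ) :
    Differentiable ℝ (fun q : ℝ × ℝ => (q.1 : ℂ) ^ k) := by
  fun_prop

theorem ofReal_fst_mul_pdx_pow (k : ℕ) (p : ℝ × ℝ) :
    (p.1 : ℂ) * pdx (fun q : ℝ × ℝ => (q.1 : ℂ) ^ k) p = k * (p.1 : ℂ) ^ k := by
  induction k with
  | zero => simp [pdx]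
  | succ k ih =>
    have h := congrFun (pdx_mul (differentiable_ofReal_fst_pow k)
      (differentiable_ofReal_fst_pow 1)) p
    simp only [pow_one, Pi.add_apply, Pi.mul_apply, pdx_ofReal_fst, Pi.one_apply] at h
    rw [show (fun q : ℝ × ℝ => (q.1 : ℂ) ^ (k + 1)) = (fun q => (q.1 : ℂ) ^ k) * fun q => (q.1 : ℂ)
      from funext fun q => pow_succ _ _, h]
    push_cast
    linear_combination (p.1 : ℂ) * ih

theorem ofReal_fst_mul_pdx_pow_mul {c : ℂ} (hf : Differentiable ℝ f) (hfc : pdx f = c • f)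
    (k : ℕ) (p : ℝ × ℝ) :
    (p.1 : ℂ) * pdx (fun q => (q.1 : ℂ) ^ k * f q) p = (k + c * p.1) * ((p.1 : ℂ) ^ k * f p) := by
  have h := congrFun (pdx_mul (differentiable_ofReal_fst_pow k) hf) p
  simp only [Pi.add_apply, Pi.mul_apply, hfc, Pi.smul_apply, smul_eq_mul] at h
  rw [show (fun q => (q.1 : ℂ) ^ k * f q) = (fun q : ℝ × ℝ => (q.1 : ℂ) ^ k) * f from rfl, h]
  linear_combination f p * ofReal_fst_mul_pdx_pow k p

end Calculus

noncomputable def pdxEnd (V : Submodule ℂ (ℝ × ℝ → ℂ)) (hdiff : ∀ f ∈ V, Differentiable ℝ f)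
    (hV : ∀ f ∈ V, pdx f ∈ V) : Module.End ℂ V where
  toFun f := ⟨pdx f, hV f f.2⟩
  map_add' f g := Subtype.ext (pdx_add (hdiff f f.2) (hdiff g g.2))
  map_smul' c f := Subtype.ext (pdx_smul c (hdiff f f.2))

theorem exists_ne_zero_pdx_eq_smul {V : Submodule ℂ (ℝ × ℝ → ℂ)} [FiniteDimensional ℂ V]
    (hne : V ≠ ⊥) (hdiff : ∀ f ∈ V, Differentiable ℝ f) (hV : ∀ f ∈ V, pdx f ∈ V) :
    ∃ c : ℂ, ∃ f ∈ V, f ≠ 0 ∧ pdx f = c • f := by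
  have : Nontrivial V := Submodule.nontrivial_iff_ne_bot.mpr hne
  obtain ⟨c, hc⟩ := Module.End.exists_eigenvalue (pdxEnd V hdiff hV)
  obtain ⟨f, hf⟩ := hc.exists_hasEigenvector
  exact ⟨c, f, f.2, fun h => hf.2 (Subtype.ext h), congrArg Subtype.val hf.apply_eq_smul⟩

section PowMulMem

variable {m c : ℂ} {V : Submodule ℂ (ℝ × ℝ → ℂ)} {f : ℝ × ℝ → ℂ}

theorem pow_mul_mem_of_pdx_eq_smul (hc : c ≠ 0)
    (hD₂ : ∀ f ∈ V, (fun p => 2 * (p.1 : ℂ) * pdx f p - m * f p) ∈ V)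
    (hfV : f ∈ V) (hf : Differentiable ℝ f) (hfc : pdx f = c • f) (k : ℕ) :
    (fun q : ℝ × ℝ => (q.1 : ℂ) ^ k * f q) ∈ V := by
  induction k with
  | zero => simpa using hfV
  | succ k ih =>
    have h := V.sub_mem (hD₂ _ ih) (V.smul_mem (2 * k - m) ih)
    convert V.smul_mem (2 * c)⁻¹ h using 1
    rw [eq_inv_smul_iff₀ (mul_ne_zero two_ne_zero hc)]
    ext p
    simp only [Pi.smul_apply, Pi.sub_apply, smul_eq_mul]
    linear_combination (-2 : ℂ) * ofReal_fst_mul_pdx_pow_mul hf hfc k p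

theorem pow_mul_mem_of_pdx_eq_zero (hm : ∀ n : ℕ, m ≠ n)
    (hD₃ : ∀ f ∈ V, (fun p => (p.1 : ℂ) ^ 2 * pdx f p - m * (p.1 : ℂ) * f p) ∈ V)
    (hfV : f ∈ V) (hf : Differentiable ℝ f) (hf0 : pdx f = 0) (k : ℕ) :
    (fun q : ℝ × ℝ => (q.1 : ℂ) ^ k * f q) ∈ V := by
  induction k with
  | zero => simpa using hfV
  | succ k ih =>
    have hkm : (k : ℂ) - m ≠ 0 := sub_ne_zero.mpr (hm k).symm
    convert V.smul_mem ((k : ℂ) - m)⁻¹ (hD₃ _ ih) using 1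
    rw [eq_inv_smul_iff₀ hkm]
    ext p
    simp only [Pi.smul_apply, smul_eq_mul]
    linear_combination (-(p.1 : ℂ)) *
      ofReal_fst_mul_pdx_pow_mul (c := 0) hf (by rw [hf0, zero_smul]) k p

end PowMulMem

theorem linearIndependent_pow_mul {f : ℝ × ℝ → ℂ} (hf : Continuous f) (hf0 : f ≠ 0) :
    LinearIndependent ℂ (fun k : ℕ => fun q : ℝ × ℝ => (q.1 : ℂ) ^ k * f q) := by
  let L : ℂ[X] →ₗ[ℂ] (ℝ × ℝ → ℂ) :=
    { toFun P q := P.eval (q.1 : ℂ) * f q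
      map_add' P Q := by ext; simp [add_mul]
      map_smul' c P := by ext; simp [mul_assoc] }
  have hL : LinearMap.ker L = ⊥ := by
    refine LinearMap.ker_eq_bot'.mpr fun P hP => ?_
    obtain ⟨p, hp⟩ := Function.ne_iff.mp hf0
    have hnhds : {t : ℝ | f (t, p.2) ≠ 0} ∈ nhds p.1 :=
      (isOpen_compl_singleton.preimage (by fun_prop)).mem_nhds hp
    refine eq_zero_of_infinite_isRoot P ((infinite_of_mem_nhds _ hnhds).image
      Complex.ofReal_injective.injOn |>.mono ?_)
    rintro _ ⟨t, ht, rfl⟩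
    exact (mul_eq_zero.mp (congrFun hP (t, p.2))).resolve_right ht
  have hLX : L ∘ basisMonomials ℂ = fun k q => (q.1 : ℂ) ^ k * f q := by
    ext k q
    simp [L, ← C_mul_X_pow_eq_monomial]
  exact hLX ▸ (basisMonomials ℂ).linearIndependent.map' L hL

theorem m_nat_of_invariant_subspace_general
    (m : ℂ) (V : Submodule ℂ (ℝ × ℝ → ℂ))
    (hsmooth : ∀ f ∈ V, ContDiff ℝ (⊤ : ℕ∞) f)
    (hne : V ≠ ⊥) (hfin : FiniteDimensional ℂ V)
    (hD₁ : ∀ f ∈ V, pdx f ∈ V)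
    (hD₂ : ∀ f ∈ V, (fun p => 2 * (p.1 : ℂ) * pdx f p - m * f p) ∈ V)
    (hD₃ : ∀ f ∈ V, (fun p => (p.1 : ℂ) ^ 2 * pdx f p - m * (p.1 : ℂ) * f p) ∈ V) :
    ∃ n : ℕ, m = n := by
  by_contra! hm
  have hdiff : ∀ f ∈ V, Differentiable ℝ f := fun f hf => (hsmooth f hf).differentiable (by simp)
  obtain ⟨c, f, hfV, hf0, hfc⟩ := exists_ne_zero_pdx_eq_smul hne hdiff hD₁
  have hpow (k : ℕ) : (fun q : ℝ × ℝ => (q.1 : ℂ) ^ k * f q) ∈ V := by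
    rcases eq_or_ne c 0 with rfl | hc
    · exact pow_mul_mem_of_pdx_eq_zero hm hD₃ hfV (hdiff f hfV) (by rw [hfc, zero_smul]) k
    · exact pow_mul_mem_of_pdx_eq_smul hc hD₂ hfV (hdiff f hfV) hfc k
  exact Module.Finite.not_linearIndependent_of_infinite (R := ℂ) (fun k => (⟨_, hpow k⟩ : V))
    (.of_comp V.subtype (linearIndependent_pow_mul (hsmooth f hfV).continuous hf0))

/-- If the operators `f ↦ f_x`, `f ↦ 2x f_x - m f`, `f ↦ x² f_x - mx f`,
`f ↦ f_y` admit a nonzero finite-dimensional invariant subspace of smooth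
functions, then `m` is a nonnegative integer. -/
theorem m_nat_of_invariant_subspace
    (m : ℂ) (V : Submodule ℂ (ℝ × ℝ → ℂ))
    (hsmooth : ∀ f ∈ V, ContDiff ℝ (⊤ : ℕ∞) f)
    (hne : V ≠ ⊥) (hfin : FiniteDimensional ℂ V)
    (hD₁ : ∀ f ∈ V, pdx f ∈ V)
    (hD₂ : ∀ f ∈ V, (fun p => 2 * (p.1 : ℂ) * pdx f p - m * f p) ∈ V)
    (hD₃ : ∀ f ∈ V, (fun p => (p.1 : ℂ) ^ 2 * pdx f p - m * (p.1 : ℂ) * f p) ∈ V)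
    (hD₄ : ∀ f ∈ V, pdy f ∈ V) :
    ∃ n : ℕ, m = n :=
  m_nat_of_invariant_subspace_general m V hsmooth hne hfin hD₁ hD₂ hD₃
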